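/- arXiv:2304.05227 — 6 statements merged into one kernel-verified Lean document; each statement's English description precedes it below -/
import Mathlib

section
/- Let P₁,...,Pₙ be nonnegative matrices with Pₗ of size mₗ×m_{l+1}, and let Δₗ be partitions of {1,...,mₗ} with each Pₗ being [Δₗ]-positive on Δ_{l+1}. If Δ₁ is the trivial partition ({1,...,m₁}) and Δ_{n+1} is the partition of {1,...,m_{n+1}} into singletons, then the product P₁P₂⋯Pₙ is entrywise strictly positive. -/
/-- The product `P 0 * P 1 * ⋯ * P (n-1)` of a chain of rectangular matrices. -/
def chainProd (m : ℕ → ℕ) (P : ∀ l : ℕ, Matrix (Fin (m l)) (Fin (m (l + 1))) ℝ) :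
    ∀ n : ℕ, Matrix (Fin (m 0)) (Fin (m n)) ℝ
  | 0 => 1
  | n + 1 => chainProd m P n * P n

/-- a chain of `[Δₗ]`-positive matrices, from the trivial partition
to the partition into singletons, has strictly positive product. -/
theorem chain_delta_positive (n : ℕ) (hn : 1 ≤ n) (m : ℕ → ℕ) (hm : ∀ l, 1 ≤ m l)
    (P : ∀ l : ℕ, Matrix (Fin (m l)) (Fin (m (l + 1))) ℝ)
    (hP : ∀ l i j, 0 ≤ P l i j)
    (Δ : ∀ l : ℕ, Finpartition (Finset.univ : Finset (Fin (m l))))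
    (h : ∀ l < n, ∀ V ∈ (Δ (l + 1)).parts, ∃ U ∈ (Δ l).parts,
      ∀ i ∈ U, ∃ j ∈ V, 0 < P l i j)
    (h0 : (Δ 0).parts = {Finset.univ})
    (hsing : ∀ j : Fin (m n), {j} ∈ (Δ n).parts) :
    ∀ i j, 0 < chainProd m P n i j := by
  have nonneg : ∀ l i j, 0 ≤ chainProd m P l i j := by
    intro l
    induction l with
    | zero =>
      intro i j
      simp only [chainProd, Matrix.one_apply]
      split <;> norm_num
    | succ l ih =>
      intro i j
      simp only [chainProd, Matrix.mul_apply]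
      exact Finset.sum_nonneg fun k _ => mul_nonneg (ih i k) (hP l k j)
  have key : ∀ l ≤ n, ∀ V ∈ (Δ l).parts, ∀ i, ∃ j ∈ V, 0 < chainProd m P l i j := by
    intro l
    induction l with
    | zero =>
      intro _ V hV i
      rw [h0, Finset.mem_singleton] at hV
      subst hV
      refine ⟨i, Finset.mem_univ i, ?_⟩
      simp [chainProd, Matrix.one_apply]
    | succ l ih =>
      intro hln V hV i
      obtain ⟨U, hU, hUpos⟩ := h l hln V hV
      obtain ⟨j', hj'U, hj'⟩ := ih (Nat.le_of_succ_le hln) U hU i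
      obtain ⟨j, hjV, hjpos⟩ := hUpos j' hj'U
      refine ⟨j, hjV, ?_⟩
      simp only [chainProd, Matrix.mul_apply]
      exact Finset.sum_pos' (fun k _ => mul_nonneg (nonneg l i k) (hP l k j))
        ⟨j', Finset.mem_univ j', mul_pos hj' hjpos⟩
  intro i j
  obtain ⟨j', hj', hpos⟩ := key n le_rfl {j} (hsing j) i
  rw [Finset.mem_singleton] at hj'
  subst hj'
  exact hpos
end

section
/- Let G be a graph with n vertices (n≥2), k∈{1,...,n-1}, and A its adjacency matrix. Then G is k-connected if and only if A is a g_k^+-matrix. -/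
open scoped Classical

/-- The simple graph obtained from a symmetric adjacency relation (loops allowed)
by deleting the loops. -/
def stripLoops {n : ℕ} (A : Fin n → Fin n → Prop) (h : Symmetric A) :
    SimpleGraph (Fin n) where
  Adj i j := i ≠ j ∧ A i j
  symm := ⟨fun _ _ hij => ⟨hij.1.symm, h hij.2⟩⟩
  loopless := ⟨fun _ hi => hi.1 rfl⟩

/-- `C` is a vertex cut of `G`: deleting the vertices of `C` disconnects the graph. -/
def IsVertexCut {n : ℕ} (G : SimpleGraph (Fin n)) (C : Finset (Fin n)) : Prop :=
  C ≠ Finset.univ ∧ ¬ (G.induce ((↑C : Set (Fin n))ᶜ)).Connected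

/-- The connectivity `κ(G)`: the minimum size of a vertex cut if `G` is not
complete, and `n - 1` otherwise. -/
noncomputable def connectivity {n : ℕ} (G : SimpleGraph (Fin n)) : ℕ :=
  if G = ⊤ then n - 1
  else sInf {k | ∃ C : Finset (Fin n), C.card = k ∧ IsVertexCut G C}

/-- `P` is a `g_k^+`-matrix. -/
def IsGkMatrix {n : ℕ} (P : Matrix (Fin n) (Fin n) ℝ) (k : ℕ) : Prop :=
  ∀ F : Finset (Fin n), F.Nonempty → F ≠ Finset.univ →
    ∃ E : Finset (Fin n), E.Nonempty ∧ E ⊆ Fᶜ ∧ min k Fᶜ.card ≤ E.card ∧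
      ∀ i ∈ E, ∃ j ∈ F, 0 < P i j

lemma reach_mem {V : Type*} (G : SimpleGraph V) (S T : Set V)
    (hT : ∀ a b : V, a ∈ T → b ∈ S → G.Adj a b → b ∈ T) :
    ∀ ⦃a b : S⦄, (G.induce S).Walk a b → ↑a ∈ T → ↑b ∈ T := by
  intro a b w
  induction w with
  | nil => exact id
  | cons huv p ih => intro ha; exact ih (hT _ _ ha (Subtype.coe_prop _) huv)

lemma exists_cut {n : ℕ} (G : SimpleGraph (Fin n)) (h : G ≠ ⊤) :
    ∃ C : Finset (Fin n), IsVertexCut G C := by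
  have : ∃ x y : Fin n, x ≠ y ∧ ¬ G.Adj x y := by
    by_contra hc
    push_neg at hc
    exact h (SimpleGraph.ext (by ext x y; exact ⟨fun hxy => hxy.ne, fun hxy => hc x y hxy⟩))
  obtain ⟨x, y, hxy, hnadj⟩ := this
  refine ⟨({x, y} : Finset (Fin n))ᶜ, ?_, ?_⟩
  · intro hu
    have : x ∈ (({x, y} : Finset (Fin n))ᶜ) := hu ▸ Finset.mem_univ x
    simp at this
  · intro hconn
    have hxS : x ∈ (↑(({x, y} : Finset (Fin n))ᶜ) : Set (Fin n))ᶜ := by simp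
    have hyS : y ∈ (↑(({x, y} : Finset (Fin n))ᶜ) : Set (Fin n))ᶜ := by simp
    obtain ⟨w⟩ := hconn.preconnected ⟨x, hxS⟩ ⟨y, hyS⟩
    have := reach_mem G _ {x} (fun a b ha hb hadj => by
      have hax : a = x := ha
      have hb2 : b = x ∨ b = y := by have := hb; simp at this; tauto
      rcases hb2 with h1 | h1
      · exact h1
      · exact absurd (hax ▸ h1 ▸ hadj) hnadj) w rfl
    exact hxy this.symm

lemma cut_of_boundary {n : ℕ} (G : SimpleGraph (Fin n)) (F : Finset (Fin n))
    (hF : F.Nonempty) (v : Fin n) (hvF : v ∉ F) (hvN : ¬ ∃ j ∈ F, G.Adj v j) :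
    IsVertexCut G (Finset.univ.filter (fun i => i ∉ F ∧ ∃ j ∈ F, G.Adj i j)) := by
  set C := Finset.univ.filter (fun i => i ∉ F ∧ ∃ j ∈ F, G.Adj i j) with hC
  obtain ⟨f, hf⟩ := hF
  have hfC : f ∉ C := by simp [hC, hf]
  have hvC : v ∉ C := by simp only [hC, Finset.mem_filter]; exact fun h => hvN h.2.2
  constructor
  · intro hu
    exact hfC (hu ▸ Finset.mem_univ f)
  · intro hconn
    have hfS : f ∈ (↑C : Set (Fin n))ᶜ := by simpa using hfC
    have hvS : v ∈ (↑C : Set (Fin n))ᶜ := by simpa using hvC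
    obtain ⟨w⟩ := hconn.preconnected ⟨f, hfS⟩ ⟨v, hvS⟩
    have hvmem := reach_mem G _ (↑F : Set (Fin n)) (fun a b ha hb hadj => by
      by_contra hbF
      have hbF' : b ∉ F := by simpa using hbF
      have : b ∈ C := by
        simp only [hC, Finset.mem_filter, Finset.mem_univ, true_and]
        exact ⟨hbF', a, by simpa using ha, hadj.symm⟩
      exact (by simpa using hb : b ∉ C) this) w (by simpa using hf)
    exact hvF (by simpa using hvmem)

/-- a graph with `n ≥ 2` vertices is `k`-connected iff its
adjacency matrix is a `g_k^+`-matrix. -/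
theorem kConnected_iff_gk {n : ℕ} (hn : 2 ≤ n) (k : ℕ) (hk : 1 ≤ k) (hk' : k ≤ n - 1)
    (A : Fin n → Fin n → Prop) (hA : Symmetric A)
    (M : Matrix (Fin n) (Fin n) ℝ)
    (hM : ∀ i j, M i j = if A i j then (1 : ℝ) else 0) :
    k ≤ connectivity (stripLoops A hA) ↔ IsGkMatrix M k := by
  set G := stripLoops A hA with hG
  have hMpos : ∀ i j, 0 < M i j ↔ A i j := by
    intro i j; rw [hM i j]; split
    · exact iff_of_true one_pos ‹_›
    · exact iff_of_false (lt_irrefl 0) ‹_›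
  constructor
  · intro hκ F hFne hFuniv
    set NF := Finset.univ.filter (fun i => i ∉ F ∧ ∃ j ∈ F, G.Adj i j) with hNF
    have hNFsub : NF ⊆ Fᶜ := fun i hi =>
      Finset.mem_compl.2 (Finset.mem_filter.1 hi).2.1
    have hadjM : ∀ i ∈ NF, ∃ j ∈ F, 0 < M i j := by
      intro i hi
      obtain ⟨j, hj, hadj⟩ := (Finset.mem_filter.1 hi).2.2
      exact ⟨j, hj, (hMpos i j).2 hadj.2⟩
    by_cases hcase : NF = Fᶜ
    · have hFc : (Fᶜ : Finset (Fin n)).Nonempty := by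
        rw [Finset.nonempty_iff_ne_empty]
        intro h0
        exact hFuniv (by simpa [Finset.compl_eq_empty_iff] using h0)
      obtain ⟨v, hv⟩ := hFc
      exact ⟨Fᶜ, ⟨v, hv⟩, Finset.Subset.refl _, min_le_right _ _,
        hcase ▸ hadjM⟩
    · obtain ⟨v, hvc, hvNF⟩ := Finset.exists_of_ssubset (hNFsub.ssubset_of_ne hcase)
      have hvF : v ∉ F := Finset.mem_compl.1 hvc
      have hvN : ¬ ∃ j ∈ F, G.Adj v j := by
        intro hex
        exact hvNF (Finset.mem_filter.2 ⟨Finset.mem_univ v, hvF, hex⟩)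
      have hcut := cut_of_boundary G F hFne v hvF hvN
      have hGne : G ≠ ⊤ := by
        intro htop
        obtain ⟨f, hf⟩ := hFne
        exact hvN ⟨f, hf, by rw [htop]; exact fun h => hvF (h ▸ hf)⟩
      have hconn_le : connectivity G ≤ NF.card := by
        rw [connectivity, if_neg hGne]
        exact Nat.sInf_le ⟨NF, rfl, hcut⟩
      have hk_le : k ≤ NF.card := le_trans hκ hconn_le
      exact ⟨NF, Finset.card_pos.1 (lt_of_lt_of_le hk hk_le), hNFsub,
        le_trans (min_le_left _ _) hk_le, hadjM⟩
  · intro hgk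
    by_cases htop : G = ⊤
    · rw [connectivity, if_pos htop]; exact hk'
    · rw [connectivity, if_neg htop]
      apply le_csInf
      · obtain ⟨C, hcut⟩ := exists_cut G htop
        exact ⟨C.card, C, rfl, hcut⟩
      · rintro m ⟨C, rfl, hCu, hCdis⟩
        obtain ⟨x, hx⟩ : ∃ x, x ∉ C := by
          by_contra hc
          push_neg at hc
          exact hCu (Finset.eq_univ_iff_forall.2 hc)
        have hSne : Nonempty ((↑C : Set (Fin n))ᶜ : Set (Fin n)) :=
          ⟨⟨x, by simpa using hx⟩⟩
        rw [SimpleGraph.connected_iff] at hCdis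
        have hnp : ¬ (G.induce ((↑C : Set (Fin n))ᶜ)).Preconnected := by
          intro hp; exact hCdis ⟨hp, hSne⟩
        rw [SimpleGraph.Preconnected] at hnp
        push_neg at hnp
        obtain ⟨a, b, hab⟩ := hnp
        set F := Finset.univ.filter (fun x : Fin n =>
          ∃ hx : x ∈ ((↑C : Set (Fin n))ᶜ),
            (G.induce ((↑C : Set (Fin n))ᶜ)).Reachable a ⟨x, hx⟩) with hF
        have hmemF : ∀ x : Fin n, x ∈ F ↔ ∃ hx : x ∈ ((↑C : Set (Fin n))ᶜ),
            (G.induce ((↑C : Set (Fin n))ᶜ)).Reachable a ⟨x, hx⟩ := by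
          intro x
          simp [hF]
        have haF : ↑a ∈ F := (hmemF ↑a).2 ⟨a.2, by
          rw [Subtype.eta]⟩
        have hbF : ↑b ∉ F := by
          intro hb
          obtain ⟨hx, hr⟩ := (hmemF ↑b).1 hb
          exact hab (by rwa [Subtype.eta] at hr)
        have hFuniv : F ≠ Finset.univ := fun h => hbF (h ▸ Finset.mem_univ _)
        obtain ⟨E, hEne, hEsub, hEcard, hEadj⟩ := hgk F ⟨↑a, haF⟩ hFuniv
        have hFC : ∀ x ∈ F, x ∉ C := by
          intro x hxF hxC
          obtain ⟨hx, _⟩ := (hmemF x).1 hxF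
          exact (by simpa using hx : x ∉ C) hxC
        have hEC : E ⊆ C := by
          intro i hi
          obtain ⟨j, hjF, hMij⟩ := hEadj i hi
          have hiF : i ∉ F := Finset.mem_compl.1 (hEsub hi)
          have hAij : A i j := (hMpos i j).1 hMij
          have hneij : i ≠ j := fun h => hiF (h ▸ hjF)
          have hadj : G.Adj i j := ⟨hneij, hAij⟩
          by_contra hiC
          have hiS : i ∈ ((↑C : Set (Fin n))ᶜ) := by simpa using hiC
          obtain ⟨hjS, hreach⟩ := (hmemF j).1 hjF
          have hadj' : (G.induce ((↑C : Set (Fin n))ᶜ)).Adj ⟨j, hjS⟩ ⟨i, hiS⟩ := by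
            exact hadj.symm
          exact hiF ((hmemF i).2 ⟨hiS, hreach.trans hadj'.reachable⟩)
        have hcardEC : E.card ≤ C.card := Finset.card_le_card hEC
        rcases le_total k Fᶜ.card with hle | hle
        · calc k = min k Fᶜ.card := (min_eq_left hle).symm
            _ ≤ E.card := hEcard
            _ ≤ C.card := hcardEC
        · exfalso
          have h1 : Fᶜ.card ≤ C.card :=
            le_trans (by simpa [min_eq_right hle] using hEcard) hcardEC
          have h2 : C.card < Fᶜ.card := by
            have hbC : (↑b : Fin n) ∉ C := fun h => b.2 (Finset.mem_coe.2 h)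
            have hbFc : ↑b ∈ Fᶜ := Finset.mem_compl.2 hbF
            have hsub : insert (↑b : Fin n) C ⊆ Fᶜ := by
              intro x hxm
              rcases Finset.mem_insert.1 hxm with h | h
              · exact h ▸ hbFc
              · exact Finset.mem_compl.2 (fun hxF => hFC x hxF h)
            calc C.card < (insert (↑b : Fin n) C).card := by
                  rw [Finset.card_insert_of_notMem hbC]; omega
              _ ≤ Fᶜ.card := Finset.card_le_card hsub
          omega
end

section
/- Let n≥2, k∈{1,...,n-1}, and P a nonnegative n×n g_k^+-matrix. Then (I+P)^m > 0 entrywise, where m = ⌊(n-2)/k⌋ + 1. -/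
/-- if `P` is a `g_k^+`-matrix then `(I + P)^(⌊(n-2)/k⌋ + 1)` is
entrywise positive. -/
theorem gk_one_add_pow_pos {n : ℕ} (hn : 2 ≤ n)
    (P : Matrix (Fin n) (Fin n) ℝ) (hP : ∀ i j, 0 ≤ P i j)
    (k : ℕ) (hk : 1 ≤ k) (hk' : k ≤ n - 1) (hG : IsGkMatrix P k) :
    ∀ i j, 0 < ((1 + P) ^ ((n - 2) / k + 1)) i j := by
  set Q : Matrix (Fin n) (Fin n) ℝ := 1 + P with hQdef
  have hQ0 : ∀ i j, 0 ≤ Q i j := by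
    intro i j
    have := hP i j
    simp only [hQdef, Matrix.add_apply, Matrix.one_apply]
    split_ifs <;> linarith
  have hQP : ∀ i j, P i j ≤ Q i j := by
    intro i j
    simp only [hQdef, Matrix.add_apply, Matrix.one_apply]
    split_ifs <;> linarith
  have hQdiag : ∀ i, 0 < Q i i := by
    intro i
    have := hP i i
    simp only [hQdef, Matrix.add_apply, Matrix.one_apply_eq]
    linarith
  have hpow0 : ∀ t i j, 0 ≤ (Q ^ t) i j := by
    intro t
    induction t with
    | zero =>
      intro i j
      simp only [pow_zero, Matrix.one_apply]
      split_ifs <;> norm_num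
    | succ t ih =>
      intro i j
      rw [pow_succ', Matrix.mul_apply]
      exact Finset.sum_nonneg fun l _ => mul_nonneg (hQ0 i l) (ih l j)
  intro i j
  -- the set of rows positive in column j after t steps
  set S : ℕ → Finset (Fin n) :=
    fun t => Finset.univ.filter (fun i => 0 < (Q ^ t) i j) with hSdef
  have hmemS : ∀ t i, i ∈ S t ↔ 0 < (Q ^ t) i j := by
    intro t i; simp [hSdef]
  have hmono : ∀ t, S t ⊆ S (t + 1) := by
    intro t l hl
    rw [hmemS] at hl ⊢
    rw [pow_succ', Matrix.mul_apply]
    refine Finset.sum_pos' (fun x _ => mul_nonneg (hQ0 l x) (hpow0 t x j)) ?_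
    exact ⟨l, Finset.mem_univ l, mul_pos (hQdiag l) hl⟩
  have hcard : ∀ t, min n (1 + t * k) ≤ (S t).card := by
    intro t
    induction t with
    | zero =>
      have hj : j ∈ S 0 := by
        rw [hmemS]
        simp [Matrix.one_apply_eq]
      have := Finset.card_pos.mpr ⟨j, hj⟩
      omega
    | succ t ih =>
      by_cases hU : S t = Finset.univ
      · have h1 : (S t).card ≤ (S (t + 1)).card := Finset.card_le_card (hmono t)
        have h2 : (S t).card = n := by rw [hU]; simp
        omega
      · have hne : (S t).Nonempty := by
          rw [← Finset.card_pos]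
          omega
        obtain ⟨E, hEne, hEsub, hEcard, hEpos⟩ := hG (S t) hne hU
        have hEsub' : E ⊆ S (t + 1) := by
          intro l hl
          obtain ⟨j', hj', hPj'⟩ := hEpos l hl
          rw [hmemS] at hj' ⊢
          rw [pow_succ', Matrix.mul_apply]
          refine Finset.sum_pos' (fun x _ => mul_nonneg (hQ0 l x) (hpow0 t x j)) ?_
          exact ⟨j', Finset.mem_univ j',
            mul_pos (lt_of_lt_of_le hPj' (hQP l j')) hj'⟩
        have hdisj : Disjoint (S t) E := by
          refine Finset.disjoint_left.mpr fun x hx hxE => ?_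
          have := hEsub hxE
          simp only [Finset.mem_compl] at this
          exact this hx
        have hsub : S t ∪ E ⊆ S (t + 1) := Finset.union_subset (hmono t) hEsub'
        have hcu : (S t).card + E.card ≤ (S (t + 1)).card := by
          rw [← Finset.card_union_of_disjoint hdisj]
          exact Finset.card_le_card hsub
        have hcompl : (S t)ᶜ.card = n - (S t).card := by
          rw [Finset.card_compl]
          simp
        have hle : (S t).card ≤ n := by
          have := Finset.card_le_univ (S t)
          simpa using this
        rw [hcompl] at hEcard
        have hmul : (t + 1) * k = t * k + k := by ring
        rw [hmul]
        generalize t * k = c at ih ⊢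
        omega
  -- arithmetic: 1 + ((n-2)/k + 1) * k ≥ n
  have harith : n ≤ 1 + ((n - 2) / k + 1) * k := by
    have h1 := Nat.div_add_mod (n - 2) k
    have h2 : (n - 2) % k < k := Nat.mod_lt _ (by omega)
    have h3 : ((n - 2) / k + 1) * k = k * ((n - 2) / k) + k := by ring
    rw [h3]
    generalize k * ((n - 2) / k) = c at h1 ⊢
    omega
  have hfin : (S ((n - 2) / k + 1)).card = n := by
    have h1 := hcard ((n - 2) / k + 1)
    have hle : (S ((n - 2) / k + 1)).card ≤ n := by
      have := Finset.card_le_univ (S ((n - 2) / k + 1))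
      simpa using this
    omega
  have : S ((n - 2) / k + 1) = Finset.univ :=
    Finset.eq_univ_of_card _ (by simpa using hfin)
  have hi : i ∈ S ((n - 2) / k + 1) := this ▸ Finset.mem_univ i
  rwa [hmemS] at hi
end

section
/- Let n≥2, k∈{1,...,n-1}, m=⌊(n-2)/k⌋+1, and let P₁,...,P_m be nonnegative n×n g_k^+-matrices, each with all main diagonal entries positive. Then the product P₁P₂⋯P_m is entrywise strictly positive. In particular, if P is a g_k^+-matrix with positive diagonal, then P^m>0, so P is primitive with index of primitivity at most ⌊(n-2)/k⌋+1. -/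
lemma gk_mulVec_nonneg {n : ℕ} {M : Matrix (Fin n) (Fin n) ℝ} {v : Fin n → ℝ}
    (hM : ∀ i j, 0 ≤ M i j) (hv : ∀ i, 0 ≤ v i) : ∀ i, 0 ≤ M.mulVec v i := by
  intro i
  simp only [Matrix.mulVec, dotProduct]
  exact Finset.sum_nonneg fun x _ => mul_nonneg (hM i x) (hv x)

lemma gk_step {n k : ℕ} {M : Matrix (Fin n) (Fin n) ℝ} {v : Fin n → ℝ}
    (hM : ∀ i j, 0 ≤ M i j) (hG : IsGkMatrix M k) (hd : ∀ i, 0 < M i i)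
    (hv : ∀ i, 0 ≤ v i) (hne : (Finset.univ.filter (fun i => 0 < v i)).Nonempty) :
    min ((Finset.univ.filter (fun i => 0 < v i)).card + k) n ≤
      (Finset.univ.filter (fun i => 0 < M.mulVec v i)).card := by
  set F := Finset.univ.filter (fun i => 0 < v i) with hF
  set F' := Finset.univ.filter (fun i => 0 < M.mulVec v i) with hF'
  have hsub : F ⊆ F' := by
    intro i hi
    simp only [hF, Finset.mem_filter, Finset.mem_univ, true_and] at hi
    simp only [hF', Finset.mem_filter, Finset.mem_univ, true_and]
    simp only [Matrix.mulVec, dotProduct]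
    exact Finset.sum_pos' (fun x _ => mul_nonneg (hM i x) (hv x))
      ⟨i, Finset.mem_univ i, mul_pos (hd i) hi⟩
  have hcard : F.card ≤ n := by
    simpa using Finset.card_le_univ F

  by_cases huniv : F = Finset.univ
  · have h1 : F.card = n := by simp [huniv]
    have h2 : F.card ≤ F'.card := Finset.card_le_card hsub
    omega
  · obtain ⟨E, hEne, hEsub, hEcard, hE⟩ := hG F hne huniv
    have hEsub' : E ⊆ F' := by
      intro i hi
      obtain ⟨j, hjF, hj⟩ := hE i hi
      simp only [hF, Finset.mem_filter, Finset.mem_univ, true_and] at hjF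
      simp only [hF', Finset.mem_filter, Finset.mem_univ, true_and]
      simp only [Matrix.mulVec, dotProduct]
      exact Finset.sum_pos' (fun x _ => mul_nonneg (hM i x) (hv x))
        ⟨j, Finset.mem_univ j, mul_pos hj hjF⟩
    have hdisj : Disjoint F E := by
      refine Finset.disjoint_left.mpr fun a haF haE => ?_
      have := hEsub haE
      simp only [Finset.mem_compl] at this
      exact this haF
    have hunion : F ∪ E ⊆ F' := Finset.union_subset hsub hEsub'
    have hcardu : (F ∪ E).card = F.card + E.card := Finset.card_union_of_disjoint hdisj
    have h3 : (F ∪ E).card ≤ F'.card := Finset.card_le_card hunion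
    have hcompl : Fᶜ.card = n - F.card := by
      simp [Finset.card_compl]
    rw [hcompl] at hEcard
    omega

lemma gk_list {n k : ℕ} (L : List (Matrix (Fin n) (Fin n) ℝ))
    (hL : ∀ M ∈ L, (∀ i j, 0 ≤ M i j) ∧ IsGkMatrix M k ∧ ∀ i, 0 < M i i)
    (v : Fin n → ℝ) (hv : ∀ i, 0 ≤ v i)
    (hne : (Finset.univ.filter (fun i => 0 < v i)).Nonempty) :
    (∀ i, 0 ≤ L.prod.mulVec v i) ∧
    min ((Finset.univ.filter (fun i => 0 < v i)).card + L.length * k) n ≤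
      (Finset.univ.filter (fun i => 0 < L.prod.mulVec v i)).card := by
  induction L with
  | nil =>
    simp only [List.prod_nil, Matrix.one_mulVec, List.length_nil, Nat.zero_mul, Nat.add_zero]
    have : (Finset.univ.filter (fun i => 0 < v i)).card ≤ n := by
      simpa using Finset.card_le_univ (Finset.univ.filter (fun i => 0 < v i))
    exact ⟨hv, by omega⟩
  | cons M L' ih =>
    have hM := hL M List.mem_cons_self
    have hL' : ∀ N ∈ L', (∀ i j, 0 ≤ N i j) ∧ IsGkMatrix N k ∧ ∀ i, 0 < N i i :=
      fun N hN => hL N (List.mem_cons_of_mem M hN)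
    obtain ⟨hw, hcardw⟩ := ih hL'
    have hwne : (Finset.univ.filter (fun i => 0 < L'.prod.mulVec v i)).Nonempty := by
      rw [← Finset.card_pos]
      have h1 : 1 ≤ (Finset.univ.filter (fun i => 0 < v i)).card :=
        Finset.card_pos.mpr hne
      have h2 : (Finset.univ.filter (fun i => 0 < v i)).card ≤ n := by
        simpa using Finset.card_le_univ (Finset.univ.filter (fun i => 0 < v i))
      have hn1 : 1 ≤ n := by
        obtain ⟨a, _⟩ := hne
        exact Fin.pos a
      omega
    have hstep := gk_step hM.1 hM.2.1 hM.2.2 hw hwne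
    have hprod : (M :: L').prod.mulVec v = M.mulVec (L'.prod.mulVec v) := by
      rw [List.prod_cons, ← Matrix.mulVec_mulVec]
    constructor
    · rw [hprod]; exact gk_mulVec_nonneg hM.1 hw
    · rw [hprod]
      simp only [List.length_cons]
      have hlk : (L'.length + 1) * k = L'.length * k + k := by ring
      rw [hlk]
      generalize L'.length * k = t at hcardw ⊢
      omega

lemma gk_main {n k : ℕ} (hn : 2 ≤ n) (hk : 1 ≤ k)
    (P : Fin ((n - 2) / k + 1) → Matrix (Fin n) (Fin n) ℝ)
    (hP : ∀ l i j, 0 ≤ P l i j)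
    (hG : ∀ l, IsGkMatrix (P l) k)
    (hdiag : ∀ l i, 0 < P l i i) :
    ∀ i j, 0 < (List.ofFn P).prod i j := by
  intro i j
  set v : Fin n → ℝ := fun x => if x = j then 1 else 0 with hvdef
  have hv : ∀ x, 0 ≤ v x := by intro x; simp [hvdef]; split <;> norm_num
  have hfilter : Finset.univ.filter (fun x => 0 < v x) = {j} := by
    ext x
    simp only [Finset.mem_filter, Finset.mem_univ, true_and, Finset.mem_singleton, hvdef]
    constructor
    · intro h; by_contra hx; simp [hx] at h
    · intro h; simp [h]
  have hne : (Finset.univ.filter (fun x => 0 < v x)).Nonempty := by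
    rw [hfilter]; exact Finset.singleton_nonempty j
  have hL : ∀ M ∈ List.ofFn P, (∀ a b, 0 ≤ M a b) ∧ IsGkMatrix M k ∧ ∀ a, 0 < M a a := by
    intro M hM
    rw [List.mem_ofFn] at hM
    obtain ⟨l, rfl⟩ := hM
    exact ⟨hP l, hG l, hdiag l⟩
  obtain ⟨_, hcard⟩ := gk_list (List.ofFn P) hL v hv hne
  rw [hfilter] at hcard
  simp only [List.length_ofFn, Finset.card_singleton] at hcard
  have hmk : n - 2 < (n - 2) / k * k + k := Nat.lt_div_mul_add hk
  have hbound : n ≤ 1 + ((n - 2) / k + 1) * k := by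
    have he : ((n - 2) / k + 1) * k = (n - 2) / k * k + k := by ring
    rw [he]
    generalize (n - 2) / k * k = t at hmk ⊢
    omega
  have hcardn : (Finset.univ.filter (fun x => 0 < (List.ofFn P).prod.mulVec v x)).card = n := by
    have hle : (Finset.univ.filter (fun x => 0 < (List.ofFn P).prod.mulVec v x)).card ≤ n := by
      simpa using Finset.card_le_univ (Finset.univ.filter (fun x => 0 < (List.ofFn P).prod.mulVec v x))
    generalize hT : ((n - 2) / k + 1) * k = t at hcard hbound
    omega
  have huniv : Finset.univ.filter (fun x => 0 < (List.ofFn P).prod.mulVec v x) = Finset.univ := by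
    apply Finset.eq_univ_of_card
    simpa using hcardn
  have hi : i ∈ Finset.univ.filter (fun x => 0 < (List.ofFn P).prod.mulVec v x) := by
    rw [huniv]; exact Finset.mem_univ i
  simp only [Finset.mem_filter, Finset.mem_univ, true_and] at hi
  have : (List.ofFn P).prod.mulVec v i = (List.ofFn P).prod i j := by
    simp [Matrix.mulVec, dotProduct, hvdef, mul_ite]
  rwa [this] at hi

/-- a product of `m = ⌊(n-2)/k⌋ + 1` nonnegative `g_k^+`-matrices
with positive diagonals is entrywise positive; in particular such a matrix `Q`
satisfies `Q^m > 0`, so `Q` is primitive with index of primitivity at most `m`. -/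
theorem gk_pos_diag_prod_pos {n k : ℕ} (hn : 2 ≤ n) (hk : 1 ≤ k) (hk' : k ≤ n - 1)
    (P : Fin ((n - 2) / k + 1) → Matrix (Fin n) (Fin n) ℝ)
    (hP : ∀ l i j, 0 ≤ P l i j)
    (hG : ∀ l, IsGkMatrix (P l) k)
    (hdiag : ∀ l i, 0 < P l i i) :
    (∀ i j, 0 < (List.ofFn P).prod i j) ∧
    ∀ Q : Matrix (Fin n) (Fin n) ℝ, (∀ i j, 0 ≤ Q i j) → IsGkMatrix Q k →
      (∀ i, 0 < Q i i) →
        (∀ i j, 0 < (Q ^ ((n - 2) / k + 1)) i j) ∧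
        sInf {t : ℕ | 1 ≤ t ∧ ∀ i j, 0 < (Q ^ t) i j} ≤ (n - 2) / k + 1 := by
  refine ⟨gk_main hn hk P hP hG hdiag, ?_⟩
  intro Q hQ hQG hQd
  have hpow : ∀ i j, 0 < (Q ^ ((n - 2) / k + 1)) i j := by
    have h := gk_main hn hk (fun _ => Q) (fun _ => hQ) (fun _ => hQG) (fun _ => hQd)
    have heq : (List.ofFn (fun _ : Fin ((n - 2) / k + 1) => Q)).prod = Q ^ ((n - 2) / k + 1) := by
      rw [List.ofFn_const, List.prod_replicate]
    rwa [heq] at h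
  exact ⟨hpow, Nat.sInf_le ⟨Nat.le_add_left 1 _, hpow⟩⟩
end

section
/- Let P be an irreducible nonnegative n×n matrix (n≥2) with exactly d positive main diagonal entries, at positions i₁,...,i_d, and let W={i₁,...,i_d}. Then the submatrix of P^{n-d} on all rows and columns in W is row-allowable (every row has a positive entry in some column of W), and the submatrix of P^{n-d} on rows in W and all columns is column-allowable. -/
/-- `P` is reducible: some simultaneous permutation of rows and columns brings it
to block lower-triangular form with an `r × (n - r)` zero block in the upper right. -/
def IsReducible {n : ℕ} (P : Matrix (Fin n) (Fin n) ℝ) : Prop :=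
  ∃ σ : Equiv.Perm (Fin n), ∃ r : ℕ, 1 ≤ r ∧ r ≤ n - 1 ∧
    ∀ i j : Fin n, (i : ℕ) < r → r ≤ (j : ℕ) → P (σ i) (σ j) = 0

lemma perm_split {n : ℕ} (S : Finset (Fin n)) :
    ∃ σ : Equiv.Perm (Fin n), ∀ x : Fin n, σ x ∈ S ↔ (x : ℕ) < S.card := by
  have hc : S.card + Sᶜ.card = n := by simp
  let σ : Equiv.Perm (Fin n) :=
    (finCongr hc.symm).trans (finSumFinEquiv.symm.trans
      ((S.equivFin.symm.sumCongr Sᶜ.equivFin.symm).trans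
        ((Equiv.sumCongr (Equiv.refl _) (Equiv.subtypeEquivRight (fun x => Finset.mem_compl))).trans
          (Equiv.sumCompl (· ∈ S)))))
  refine ⟨σ, fun x => ?_⟩
  rcases h : finSumFinEquiv.symm (finCongr hc.symm x) with a | b
  · have hx : (x : ℕ) = (a : ℕ) := by
      have := congrArg (fun z => (finSumFinEquiv z : ℕ)) h
      simpa using this
    simp only [σ, Equiv.trans_apply, h]
    simp [hx, a.isLt]
  · have hx : (x : ℕ) = S.card + (b : ℕ) := by
      have := congrArg (fun z => (finSumFinEquiv z : ℕ)) h
      simpa using this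
    simp only [σ, Equiv.trans_apply, h]
    have hb : (Sᶜ.equivFin.symm b : Fin n) ∈ Sᶜ := (Sᶜ.equivFin.symm b).2
    simp [hx, Finset.mem_compl.mp hb]

lemma reducible_of_block {n : ℕ} (P : Matrix (Fin n) (Fin n) ℝ) (S : Finset (Fin n))
    (h1 : S.Nonempty) (h2 : S ≠ Finset.univ)
    (h0 : ∀ a ∈ S, ∀ b, b ∉ S → P a b = 0) : IsReducible P := by
  obtain ⟨σ, hσ⟩ := perm_split S
  refine ⟨σ, S.card, Finset.card_pos.mpr h1, ?_, fun i j hi hj => ?_⟩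
  · have : S.card < n := by
      have := Finset.card_lt_card (Finset.ssubset_univ_iff.mpr h2)
      simpa using this
    omega
  · exact h0 _ ((hσ i).mpr hi) _ (fun hmem => absurd ((hσ j).mp hmem) (by omega))

lemma exists_edge {n : ℕ} (P : Matrix (Fin n) (Fin n) ℝ) (hP : ∀ i j, 0 ≤ P i j)
    (hirr : ¬ IsReducible P) (S : Finset (Fin n)) (h1 : S.Nonempty) (h2 : S ≠ Finset.univ) :
    ∃ a ∈ S, ∃ b, b ∉ S ∧ 0 < P a b := by
  by_contra h
  push_neg at h
  exact hirr (reducible_of_block P S h1 h2 (fun a ha b hb => le_antisymm (h a ha b hb) (hP a b)))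

lemma pow_entry_nonneg {n : ℕ} (P : Matrix (Fin n) (Fin n) ℝ) (hP : ∀ i j, 0 ≤ P i j)
    (k : ℕ) (i j : Fin n) : 0 ≤ (P ^ k) i j := by
  induction k generalizing i j with
  | zero => simp [Matrix.one_apply]; positivity
  | succ m ih =>
    rw [pow_succ, Matrix.mul_apply]
    exact Finset.sum_nonneg fun l _ => mul_nonneg (ih i l) (hP l j)

lemma aux_row {n : ℕ} (P : Matrix (Fin n) (Fin n) ℝ) (hP : ∀ i j, 0 ≤ P i j)
    (hirr : ¬ IsReducible P) (W : Finset (Fin n)) (hW : W.Nonempty)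
    (hdiag : ∀ i ∈ W, 0 < P i i) :
    ∀ i : Fin n, ∃ j ∈ W, 0 < (P ^ (n - W.card)) i j := by
  classical
  let S : ℕ → Finset (Fin n) := fun k =>
    Finset.univ.filter (fun i => ∃ w ∈ W, 0 < (P ^ k) i w)
  have hmemS : ∀ k i, i ∈ S k ↔ ∃ w ∈ W, 0 < (P ^ k) i w := by
    intro k i; simp [S]
  have hS0 : W ⊆ S 0 := fun w hw =>
    (hmemS 0 w).mpr ⟨w, hw, by simp [Matrix.one_apply]⟩
  have hmono : ∀ k, S k ⊆ S (k + 1) := by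
    intro k i hi
    obtain ⟨w, hw, hpos⟩ := (hmemS k i).mp hi
    refine (hmemS (k+1) i).mpr ⟨w, hw, ?_⟩
    rw [pow_succ, Matrix.mul_apply]
    exact Finset.sum_pos' (fun l _ => mul_nonneg (pow_entry_nonneg P hP k i l) (hP l w))
      ⟨w, Finset.mem_univ w, mul_pos hpos (hdiag w hw)⟩
  have hchain : ∀ k, S 0 ⊆ S k := by
    intro k
    induction k with
    | zero => exact subset_rfl
    | succ m ih => exact ih.trans (hmono m)
  have hgrow : ∀ k, S k ≠ Finset.univ → S k ⊂ S (k + 1) := by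
    intro k hne
    have h1 : (S k)ᶜ.Nonempty :=
      Finset.nonempty_iff_ne_empty.mpr (fun h => hne ((S k).compl_eq_empty_iff.mp h))
    have h2 : (S k)ᶜ ≠ Finset.univ := by
      rw [Finset.compl_ne_univ_iff_nonempty]
      exact hW.mono (hS0.trans (hchain k))
    obtain ⟨a, ha, b, hb, hab⟩ := exists_edge P hP hirr (S k)ᶜ h1 h2
    have ha' : a ∉ S k := Finset.mem_compl.mp ha
    have hb' : b ∈ S k := by simpa using hb
    obtain ⟨w, hw, hpos⟩ := (hmemS k b).mp hb'
    have hanext : a ∈ S (k + 1) := by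
      refine (hmemS (k+1) a).mpr ⟨w, hw, ?_⟩
      rw [pow_succ', Matrix.mul_apply]
      exact Finset.sum_pos' (fun l _ => mul_nonneg (hP a l) (pow_entry_nonneg P hP k l w))
        ⟨b, Finset.mem_univ b, mul_pos hab hpos⟩
    exact Finset.ssubset_iff_of_subset (hmono k) |>.mpr ⟨a, hanext, ha'⟩
  have hcard : ∀ k, S k = Finset.univ ∨ W.card + k ≤ (S k).card := by
    intro k
    induction k with
    | zero => exact Or.inr (by simpa using Finset.card_le_card hS0)
    | succ m ih =>
      rcases ih with h | h
      · exact Or.inl (Finset.univ_subset_iff.mp (h ▸ hmono m))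
      · by_cases hu : S m = Finset.univ
        · exact Or.inl (Finset.univ_subset_iff.mp (hu ▸ hmono m))
        · exact Or.inr (by have := Finset.card_lt_card (hgrow m hu); omega)
  have hfin : S (n - W.card) = Finset.univ := by
    rcases hcard (n - W.card) with h | h
    · exact h
    · apply Finset.eq_univ_of_card
      rw [Fintype.card_fin]
      have h1 : W.card ≤ n := by simpa using Finset.card_le_card (Finset.subset_univ W)
      have h2 : (S (n - W.card)).card ≤ n := by
        simpa using Finset.card_le_card (Finset.subset_univ (S (n - W.card)))
      omega
  intro i
  exact (hmemS _ i).mp (hfin ▸ Finset.mem_univ i)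

open Matrix in
lemma isReducible_of_transpose {n : ℕ} (P : Matrix (Fin n) (Fin n) ℝ)
    (h : IsReducible Pᵀ) : IsReducible P := by
  obtain ⟨σ, r, hr1, hr2, hz⟩ := h
  refine ⟨(Fin.revPerm : Equiv.Perm (Fin n)).trans σ, n - r, by omega, by omega, fun i j hi hj => ?_⟩
  have hn : 0 < n := by omega
  have hji : (Fin.revPerm j : ℕ) < r := by
    simp [Fin.revPerm, Fin.val_rev]; omega
  have hij : r ≤ (Fin.revPerm i : ℕ) := by
    simp [Fin.revPerm, Fin.val_rev]; omega
  have := hz (Fin.revPerm j) (Fin.revPerm i) hji hij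
  simpa [Matrix.transpose_apply] using this


open Matrix in
/-- if `P` is irreducible with its positive diagonal entries
exactly at the positions in `W` (with `d = |W| ≥ 1`), then `(P^(n-d))^W` is
row-allowable and `(P^(n-d))_W` is column-allowable. -/
theorem irreducible_partial_diag_pow {n : ℕ} (hn : 2 ≤ n)
    (P : Matrix (Fin n) (Fin n) ℝ) (hP : ∀ i j, 0 ≤ P i j)
    (hirr : ¬ IsReducible P)
    (W : Finset (Fin n)) (hW : W.Nonempty)
    (hdiag : ∀ i, 0 < P i i ↔ i ∈ W) :
    (∀ i : Fin n, ∃ j ∈ W, 0 < (P ^ (n - W.card)) i j) ∧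
    (∀ j : Fin n, ∃ i ∈ W, 0 < (P ^ (n - W.card)) i j) := by
  constructor
  · exact aux_row P hP hirr W hW (fun i hi => (hdiag i).mpr hi)
  · intro j
    have hPT : ∀ i j, 0 ≤ Pᵀ i j := fun i j => hP j i
    have hirrT : ¬ IsReducible Pᵀ := fun h => hirr (isReducible_of_transpose P h)
    obtain ⟨i, hiW, hpos⟩ := aux_row Pᵀ hPT hirrT W hW (fun i hi => (hdiag i).mpr hi) j
    refine ⟨i, hiW, ?_⟩
    rwa [← Matrix.transpose_pow, Matrix.transpose_apply] at hpos
end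

section
/- Let P₁,...,P_{n-1} be fully indecomposable nonnegative n×n matrices, n≥2. Then the product P₁P₂⋯P_{n-1} is entrywise strictly positive. -/
def FullyIndecomposable {n : ℕ} (P : Matrix (Fin n) (Fin n) ℝ) : Prop :=
  ¬ ∃ (R C : Finset (Fin n)), R.Nonempty ∧ C.Nonempty ∧ R.card + C.card = n ∧
      ∀ i ∈ R, ∀ j ∈ C, P i j = 0

open Finset Matrix

private noncomputable def supp {n : ℕ} (v : Fin n → ℝ) : Finset (Fin n) :=
  Finset.filter (fun j => 0 < v j) Finset.univ

private lemma vecMul_nonneg {n : ℕ} {v : Fin n → ℝ} {M : Matrix (Fin n) (Fin n) ℝ}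
    (hv : ∀ i, 0 ≤ v i) (hM : ∀ i j, 0 ≤ M i j) : ∀ j, 0 ≤ (v ᵥ* M) j := by
  intro j
  simp only [vecMul, dotProduct]
  exact Finset.sum_nonneg fun i _ => mul_nonneg (hv i) (hM i j)

private lemma step {n : ℕ} (hn : 2 ≤ n) {v : Fin n → ℝ} {M : Matrix (Fin n) (Fin n) ℝ}
    (hv : ∀ i, 0 ≤ v i) (hM : ∀ i j, 0 ≤ M i j) (hFI : FullyIndecomposable M)
    (hS : (supp v).Nonempty) :
    min n ((supp v).card + 1) ≤ (supp (v ᵥ* M)).card := by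
  set S := supp v with hSdef
  set T := supp (v ᵥ* M) with hTdef
  -- j ∉ T → ∀ i ∈ S, M i j = 0
  have hzero : ∀ j, j ∉ T → ∀ i ∈ S, M i j = 0 := by
    intro j hj i hi
    have hiv : 0 < v i := by simpa [hSdef, supp] using hi
    have hle : (v ᵥ* M) j ≤ 0 := by
      by_contra h
      exact hj (by simp [hTdef, supp]; linarith)
    have hsum : ∑ k, v k * M k j = 0 := le_antisymm (by simpa [vecMul, dotProduct] using hle)
      (Finset.sum_nonneg fun k _ => mul_nonneg (hv k) (hM k j))
    have := (Finset.sum_eq_zero_iff_of_nonneg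
      (fun k _ => mul_nonneg (hv k) (hM k j))).mp hsum i (Finset.mem_univ i)
    rcases mul_eq_zero.mp this with h | h
    · exact absurd h (ne_of_gt hiv)
    · exact h
  -- T is nonempty
  have hT1 : 1 ≤ T.card := by
    rcases hS with ⟨i, hi⟩
    by_contra h
    push_neg at h
    have hTe : T = ∅ := Finset.card_eq_zero.mp (by omega)
    -- row i of M is zero, contradiction with FI
    apply hFI
    refine ⟨{i}, Finset.univ \ {i}, Finset.singleton_nonempty i, ?_, ?_, ?_⟩
    · have : (Finset.univ \ {i} : Finset (Fin n)).card = n - 1 := by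
        rw [Finset.card_sdiff_of_subset (by simp)]; simp
      rw [← Finset.card_pos, this]; omega
    · rw [Finset.card_sdiff_of_subset (by simp)]; simp; omega
    · intro a ha j hj
      have : j ∉ T := by simp [hTe]
      have := hzero j this i hi
      simp only [Finset.mem_singleton] at ha
      rw [ha]; exact this
  by_contra h
  push_neg at h
  have hTn : T.card < n ∧ T.card ≤ S.card := by
    constructor <;> omega
  -- build the zero submatrix
  obtain ⟨R, hRS, hRcard⟩ := Finset.exists_subset_card_eq hTn.2
  apply hFI
  refine ⟨R, Finset.univ \ T, ?_, ?_, ?_, ?_⟩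
  · rw [← Finset.card_pos, hRcard]; omega
  · rw [← Finset.card_pos, Finset.card_sdiff_of_subset (Finset.subset_univ T)]; simp; omega
  · rw [hRcard, Finset.card_sdiff_of_subset (Finset.subset_univ T)]; simp; omega
  · intro i hi j hj
    rw [Finset.mem_sdiff] at hj
    exact hzero j hj.2 i (hRS hi)

private lemma iter {n : ℕ} (hn : 2 ≤ n) (L : List (Matrix (Fin n) (Fin n) ℝ))
    (hL : ∀ M ∈ L, (∀ i j, 0 ≤ M i j) ∧ FullyIndecomposable M) :
    ∀ v : Fin n → ℝ, (∀ i, 0 ≤ v i) → (supp v).Nonempty →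
      min n ((supp v).card + L.length) ≤ (supp (v ᵥ* L.prod)).card := by
  induction L with
  | nil =>
    intro v hv hS
    simp only [List.prod_nil, Matrix.vecMul_one, List.length_nil, Nat.add_zero]
    exact le_trans (min_le_right _ _) (le_refl _)
  | cons M L ih =>
    intro v hv hS
    obtain ⟨hM, hMFI⟩ := hL M List.mem_cons_self
    have hstep := step hn hv hM hMFI hS
    have hv' : ∀ i, 0 ≤ (v ᵥ* M) i := vecMul_nonneg hv hM
    have hS' : (supp (v ᵥ* M)).Nonempty := by
      rw [← Finset.card_pos]; omega
    have := ih (fun N hN => hL N (List.mem_cons_of_mem M hN)) (v ᵥ* M) hv' hS'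
    rw [List.prod_cons, ← Matrix.vecMul_vecMul]
    have hcard : (supp (v ᵥ* M)).card ≤ n := by
      simpa using Finset.card_le_card (Finset.subset_univ (supp (v ᵥ* M)))
    simp only [List.length_cons]
    omega

/-- a product of `n - 1` fully indecomposable nonnegative `n × n`
matrices is entrywise strictly positive. -/
theorem fully_indecomposable_prod_pos {n : ℕ} (hn : 2 ≤ n)
    (P : Fin (n - 1) → Matrix (Fin n) (Fin n) ℝ)
    (hP : ∀ l i j, 0 ≤ P l i j)
    (hFI : ∀ l, FullyIndecomposable (P l)) :
    ∀ i j, 0 < (List.ofFn P).prod i j := by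
  intro i j
  set v : Fin n → ℝ := fun k => if k = i then 1 else 0 with hv
  have hvn : ∀ k, 0 ≤ v k := by intro k; simp [hv]; split <;> norm_num
  have hsupp : supp v = {i} := by
    ext k; simp [supp, hv]
    constructor
    · intro h; by_contra hk; simp [hk] at h
    · intro h; simp [h]
  have := iter hn (List.ofFn P)
    (fun M hM => by
      obtain ⟨l, rfl⟩ := (List.mem_ofFn).mp hM
      exact ⟨hP l, hFI l⟩) v hvn (by rw [hsupp]; exact Finset.singleton_nonempty i)
  rw [hsupp, List.length_ofFn] at this
  simp only [Finset.card_singleton] at this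
  have hfull : supp (v ᵥ* (List.ofFn P).prod) = Finset.univ := by
    apply Finset.eq_univ_of_card
    have hle : (supp (v ᵥ* (List.ofFn P).prod)).card ≤ n := by
      simpa using Finset.card_le_card (Finset.subset_univ (supp (v ᵥ* (List.ofFn P).prod)))
    simp only [Fintype.card_fin]
    omega
  have hj : j ∈ supp (v ᵥ* (List.ofFn P).prod) := by rw [hfull]; exact Finset.mem_univ j
  have hjp : 0 < (v ᵥ* (List.ofFn P).prod) j := by simpa [supp] using hj
  have : (v ᵥ* (List.ofFn P).prod) j = (List.ofFn P).prod i j := by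
    simp [Matrix.vecMul, dotProduct, hv]
  rwa [this] at hjp
end
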